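/- arXiv:2112.10932 — 6 statements merged into one kernel-verified Lean document; each statement's English description precedes it below -/
import Mathlib

section
/- Let E be a p-energy on a finite set A and B ⊆ A. Define the trace [E]_B : (B → ℝ) → ℝ by [E]_B(f) = inf { E(f') : f' : A → ℝ, f'|_B = f }. Then [E]_B satisfies nonnegativity, convexity, p-homogeneity, invariance under addition of constants, and the Markov property. -/
/-!
Each operation in the definition of a `p`-energy (convex combination, scaling, adding a
constant, truncation to `[0, 1]`) sends extensions of functions on `B` to extensions of the
transformed functions, so every inequality for `E` passes to the infimum over extensions.
Scaling by `t ≠ 0` and adding a constant are invertible, which upgrades these to equalities.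
-/

/-- A (possibly degenerate) `p`-energy on `A`: nonnegative, convex,
`p`-homogeneous, invariant under addition of constants, and Markovian. -/
def IsPEnergyT {A : Type*} (p : ℝ) (E : (A → ℝ) → ℝ) : Prop :=
  (∀ f : A → ℝ, 0 ≤ E f) ∧
  (∀ f g : A → ℝ, ∀ t : ℝ, 0 < t → t < 1 →
      E (fun x => t * f x + (1 - t) * g x) ≤ t * E f + (1 - t) * E g) ∧
  (∀ (f : A → ℝ) (t : ℝ), E (fun x => t * f x) = |t| ^ p * E f) ∧
  (∀ (f : A → ℝ) (c : ℝ), E (fun x => f x + c) = E f) ∧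
  (∀ f : A → ℝ, E (fun x => min (max (f x) 0) 1) ≤ E f)

/-- The trace `[E]_B` of an energy `E` on `A` to a subset `B ⊆ A`:
`[E]_B f = inf { E f' : f' : A → ℝ, f'|_B = f }`. -/
noncomputable def traceEnergy {A : Type*} (E : (A → ℝ) → ℝ) (B : Set A) :
    (B → ℝ) → ℝ :=
  fun f => sInf {e | ∃ f' : A → ℝ, (∀ b : B, f' b = f b) ∧ E f' = e}

open Pointwise

section TraceEnergy

variable {A : Type*} {E : (A → ℝ) → ℝ} {B : Set A}

lemma traceEnergy_eq_sInf_image (f : B → ℝ) :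
    traceEnergy E B f = sInf (E '' {f' | ∀ b : B, f' b = f b}) :=
  rfl

lemma exists_extension (f : B → ℝ) : ∃ f' : A → ℝ, ∀ b : B, f' b = f b :=
  ⟨Function.extend Subtype.val f 0, fun b => Subtype.val_injective.extend_apply f 0 b⟩

lemma traceEnergy_le (h0 : ∀ g, 0 ≤ E g) {f : B → ℝ} {f' : A → ℝ}
    (hf' : ∀ b : B, f' b = f b) : traceEnergy E B f ≤ E f' :=
  csInf_le ⟨0, by rintro _ ⟨g, -, rfl⟩; exact h0 g⟩ ⟨f', hf', rfl⟩

lemma le_mul_traceEnergy_add {f : B → ℝ} {c d X : ℝ} (hc : 0 ≤ c)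
    (h : ∀ f' : A → ℝ, (∀ b : B, f' b = f b) → X ≤ c * E f' + d) :
    X ≤ c * traceEnergy E B f + d := by
  obtain ⟨f₀, hf₀⟩ := exists_extension f
  set S := E '' {f' | ∀ b : B, f' b = f b}
  have hS : S.Nonempty := ⟨E f₀, f₀, hf₀, rfl⟩
  have hX : X - d ≤ sInf (c • S) := by
    refine le_csInf hS.smul_set ?_
    rintro _ ⟨_, ⟨f', hf', rfl⟩, rfl⟩
    linarith [h f' hf', smul_eq_mul c (E f')]
  rw [Real.sInf_smul_of_nonneg hc, smul_eq_mul] at hX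
  rw [traceEnergy_eq_sInf_image]
  linarith

lemma le_traceEnergy {f : B → ℝ} {X : ℝ} (h : ∀ f' : A → ℝ, (∀ b : B, f' b = f b) → X ≤ E f') :
    X ≤ traceEnergy E B f := by
  simpa using le_mul_traceEnergy_add (E := E) (d := 0) zero_le_one (by simpa using h)

lemma traceEnergy_nonneg (h0 : ∀ g, 0 ≤ E g) (f : B → ℝ) : 0 ≤ traceEnergy E B f :=
  le_traceEnergy fun f' _ => h0 f'

lemma traceEnergy_convex (h0 : ∀ g, 0 ≤ E g)
    (hconv : ∀ f g : A → ℝ, ∀ t : ℝ, 0 < t → t < 1 →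
      E (fun x => t * f x + (1 - t) * g x) ≤ t * E f + (1 - t) * E g)
    (f g : B → ℝ) (t : ℝ) (ht0 : 0 < t) (ht1 : t < 1) :
    traceEnergy E B (fun x => t * f x + (1 - t) * g x) ≤
      t * traceEnergy E B f + (1 - t) * traceEnergy E B g := by
  refine le_mul_traceEnergy_add ht0.le fun f' hf' => ?_
  rw [add_comm]
  refine le_mul_traceEnergy_add (by linarith) fun g' hg' => ?_
  calc traceEnergy E B (fun x => t * f x + (1 - t) * g x)
      ≤ E (fun x => t * f' x + (1 - t) * g' x) := traceEnergy_le h0 (by simp [hf', hg'])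
    _ ≤ t * E f' + (1 - t) * E g' := hconv f' g' t ht0 ht1
    _ = (1 - t) * E g' + t * E f' := add_comm _ _

lemma traceEnergy_homogeneous {p : ℝ} (hp : p ≠ 0) (h0 : ∀ g, 0 ≤ E g)
    (hhom : ∀ (f : A → ℝ) (t : ℝ), E (fun x => t * f x) = |t| ^ p * E f)
    (f : B → ℝ) (t : ℝ) :
    traceEnergy E B (fun x => t * f x) = |t| ^ p * traceEnergy E B f := by
  refine le_antisymm ?_ ?_
  · simpa using le_mul_traceEnergy_add (d := 0) (by positivity) fun f' hf' =>
      (traceEnergy_le h0 (f' := fun x => t * f' x) (by simp [hf'])).trans_eq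
        ((hhom f' t).trans (add_zero _).symm)
  rcases eq_or_ne t 0 with rfl | ht
  · rw [abs_zero, Real.zero_rpow hp, zero_mul]
    exact traceEnergy_nonneg h0 _
  refine le_traceEnergy fun g hg => ?_
  calc |t| ^ p * traceEnergy E B f
      ≤ |t| ^ p * E (fun x => t⁻¹ * g x) :=
        mul_le_mul_of_nonneg_left (traceEnergy_le h0 (by simp [hg, ht])) (by positivity)
    _ = E (fun x => t * (t⁻¹ * g x)) := (hhom _ t).symm
    _ = E g := by simp only [mul_inv_cancel_left₀ ht]

lemma traceEnergy_add_const_le (h0 : ∀ g, 0 ≤ E g)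
    (hconst : ∀ (f : A → ℝ) (c : ℝ), E (fun x => f x + c) = E f) (f : B → ℝ) (c : ℝ) :
    traceEnergy E B (fun x => f x + c) ≤ traceEnergy E B f :=
  le_traceEnergy fun f' hf' =>
    (traceEnergy_le h0 (f' := fun x => f' x + c) (by simp [hf'])).trans_eq (hconst f' c)

lemma traceEnergy_add_const (h0 : ∀ g, 0 ≤ E g)
    (hconst : ∀ (f : A → ℝ) (c : ℝ), E (fun x => f x + c) = E f) (f : B → ℝ) (c : ℝ) :
    traceEnergy E B (fun x => f x + c) = traceEnergy E B f := by
  refine le_antisymm (traceEnergy_add_const_le h0 hconst f c) ?_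
  simpa using traceEnergy_add_const_le h0 hconst (fun x => f x + c) (-c)

lemma traceEnergy_truncate_le (h0 : ∀ g, 0 ≤ E g)
    (hmkv : ∀ f : A → ℝ, E (fun x => min (max (f x) 0) 1) ≤ E f) (f : B → ℝ) :
    traceEnergy E B (fun x => min (max (f x) 0) 1) ≤ traceEnergy E B f :=
  le_traceEnergy fun f' hf' => (traceEnergy_le h0 (by simp [hf'])).trans (hmkv f')

end TraceEnergy

theorem trace_isPEnergyT_general {A : Type*} (p : ℝ) (hp : 1 < p)
    (B : Set A)
    (E : (A → ℝ) → ℝ) (hE : IsPEnergyT p E) :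
    IsPEnergyT p (traceEnergy E B) := by
  obtain ⟨h0, hconv, hhom, hconst, hmkv⟩ := hE
  exact ⟨traceEnergy_nonneg h0, traceEnergy_convex h0 hconv,
    traceEnergy_homogeneous (zero_lt_one.trans hp).ne' h0 hhom,
    traceEnergy_add_const h0 hconst, traceEnergy_truncate_le h0 hmkv⟩

/-- The trace of a `p`-energy to a nonempty subset `B ⊆ A` satisfies
nonnegativity, convexity, `p`-homogeneity, invariance under addition of
constants, and the Markov property. -/
theorem trace_isPEnergyT {A : Type*} [Fintype A] (p : ℝ) (hp : 1 < p)
    (B : Set A) (hB : B.Nonempty)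
    (E : (A → ℝ) → ℝ) (hE : IsPEnergyT p E) :
    IsPEnergyT p (traceEnergy E B) :=
  trace_isPEnergyT_general p hp B E hE
end

section
/- Let E be a p-energy on a finite set A with p-effective resistance R. For x,y,z ∈ A with R(x,y), R(x,z), R(y,z) < ∞, the triangle inequality R(x,y)^{1/p} ≤ R(x,z)^{1/p} + R(z,y)^{1/p} holds. Consequently, if E is nondegenerate (E(f)=0 iff f constant), then (x,y) ↦ R(x,y)^{1/p} is a metric on A. -/
open scoped ENNReal

/-- The `p`-effective resistance, with `R(x,x) = 0` and the convention `1/0 = ∞`. -/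
noncomputable def pRes {A : Type*} [DecidableEq A]
    (E : (A → ℝ) → ℝ) (x y : A) : ℝ≥0∞ :=
  if x = y then 0
  else (ENNReal.ofReal (sInf (E '' {f : A → ℝ | f x = 0 ∧ f y = 1})))⁻¹

/-! Write `pCond E x y` for the infimum in the definition of `pRes`. By `p`-homogeneity and
invariance under constants, `|f y - f x| ^ p * pCond E x y ≤ E f` for every `f`. For `f` with
`f x = 0` and `f y = 1`, the triangle inequality `1 ≤ |f z - f x| + |f y - f z|` then bounds
`E f` from below by `(R(x,z)^{1/p} + R(z,y)^{1/p})^{-p}`, which is the triangle inequality for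
`R^{1/p}`. Under nondegeneracy all resistances are finite: by the Markov property the infimum may
be taken over `[0,1]`-valued functions, a compact set on which the convex, hence continuous,
energy attains its minimum, and a minimizer is not constant. -/

noncomputable def pCond {A : Type*} (E : (A → ℝ) → ℝ) (x y : A) : ℝ :=
  sInf (E '' {f : A → ℝ | f x = 0 ∧ f y = 1})

namespace IsPEnergyT

variable {A : Type*} {p : ℝ} {E : (A → ℝ) → ℝ}

theorem nonneg (hE : IsPEnergyT p E) (f : A → ℝ) : 0 ≤ E f := hE.1 f

theorem mul_add_const (hE : IsPEnergyT p E) (f : A → ℝ) (t c : ℝ) :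
    E (fun a => t * f a + c) = |t| ^ p * E f := by
  rw [hE.2.2.2.1 (fun a => t * f a) c, hE.2.2.1]

theorem truncate_le (hE : IsPEnergyT p E) (f : A → ℝ) :
    E (fun a => min (max (f a) 0) 1) ≤ E f := hE.2.2.2.2 f

theorem convexOn (hE : IsPEnergyT p E) : ConvexOn ℝ Set.univ E := by
  refine convexOn_iff_forall_pos.2 ⟨convex_univ, fun f _ g _ a b ha hb hab => ?_⟩
  obtain rfl : b = 1 - a := by linarith
  exact hE.2.1 f g a ha (by linarith)

end IsPEnergyT

section Conductance

variable {A : Type*} {p : ℝ} {E : (A → ℝ) → ℝ} {x y z : A}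

theorem competitors_nonempty [DecidableEq A] (hxy : x ≠ y) :
    (E '' {f : A → ℝ | f x = 0 ∧ f y = 1}).Nonempty :=
  ⟨_, Pi.single y 1, ⟨by simp [hxy], by simp⟩, rfl⟩

theorem pCond_le (hE : IsPEnergyT p E) {f : A → ℝ} (hfx : f x = 0) (hfy : f y = 1) :
    pCond E x y ≤ E f :=
  csInf_le ⟨0, by rintro _ ⟨g, -, rfl⟩; exact hE.nonneg g⟩ ⟨f, ⟨hfx, hfy⟩, rfl⟩

theorem abs_sub_rpow_mul_pCond_le (hp : p ≠ 0) (hE : IsPEnergyT p E) (f : A → ℝ) :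
    |f y - f x| ^ p * pCond E x y ≤ E f := by
  rcases eq_or_ne (f y - f x) 0 with h | h
  · rw [h, abs_zero, Real.zero_rpow hp, zero_mul]
    exact hE.nonneg f
  · have hf : f = fun a => (f y - f x) * ((f a - f x) / (f y - f x)) + f x := by
      funext a; field_simp; ring
    calc |f y - f x| ^ p * pCond E x y
        ≤ |f y - f x| ^ p * E (fun a => (f a - f x) / (f y - f x)) := by
          gcongr
          exact pCond_le hE (by simp) (div_self h)
      _ = E f := by rw [← hE.mul_add_const, ← hf]

theorem abs_sub_le_of_pCond_pos (hp : 0 < p) (hE : IsPEnergyT p E) (hm : 0 < pCond E x y)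
    (f : A → ℝ) : |f y - f x| ≤ E f ^ (1 / p) * (pCond E x y)⁻¹ ^ (1 / p) := by
  rw [← Real.mul_rpow (hE.nonneg f) (inv_nonneg.2 hm.le), one_div,
    Real.le_rpow_inv_iff_of_pos (abs_nonneg _) (by have := hE.nonneg f; positivity) hp,
    ← div_eq_mul_inv, le_div_iff₀ hm]
  exact abs_sub_rpow_mul_pCond_le hp.ne' hE f

theorem pCond_symm (hE : IsPEnergyT p E) (x y : A) : pCond E x y = pCond E y x := by
  have flip : ∀ u v : A, E '' {f : A → ℝ | f u = 0 ∧ f v = 1} ⊆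
      E '' {f : A → ℝ | f v = 0 ∧ f u = 1} := by
    rintro u v _ ⟨f, ⟨hfu, hfv⟩, rfl⟩
    refine ⟨fun a => -1 * f a + 1, ⟨by simp [hfv], by simp [hfu]⟩, ?_⟩
    rw [hE.mul_add_const, abs_neg, abs_one, Real.one_rpow, one_mul]
  exact congrArg sInf ((flip x y).antisymm (flip y x))

theorem pCond_pos [Fintype A] [DecidableEq A] (hE : IsPEnergyT p E)
    (hnd : ∀ f : A → ℝ, E f = 0 ↔ ∃ c : ℝ, ∀ a, f a = c) (hxy : x ≠ y) :
    0 < pCond E x y := by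
  set K : Set (A → ℝ) :=
    {f | f x = 0 ∧ f y = 1} ∩ Set.univ.pi fun _ => Set.Icc (0 : ℝ) 1
  have hK : IsCompact K := (isCompact_univ_pi fun _ => isCompact_Icc).inter_left <|
    (isClosed_eq (continuous_apply x) continuous_const).inter
      (isClosed_eq (continuous_apply y) continuous_const)
  have hKne : K.Nonempty :=
    ⟨Pi.single y 1, ⟨by simp [hxy], by simp⟩, fun a _ => by
      rcases eq_or_ne a y with rfl | ha <;> simp [*]⟩
  obtain ⟨f₀, ⟨⟨hf₀x, hf₀y⟩, -⟩, hmin⟩ := hK.exists_isMinOn hKne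
    ((hE.convexOn.continuousOn isOpen_univ).mono (Set.subset_univ K))
  have hf₀ : 0 < E f₀ := by
    refine (hE.nonneg f₀).lt_of_ne fun h => ?_
    obtain ⟨c, hc⟩ := (hnd f₀).1 h.symm
    have : (0 : ℝ) = 1 := by rw [← hf₀x, ← hf₀y, hc, hc]
    exact zero_ne_one this
  refine hf₀.trans_le (le_csInf (competitors_nonempty hxy) ?_)
  rintro _ ⟨g, ⟨hgx, hgy⟩, rfl⟩
  have hgK : (fun a => min (max (g a) 0) 1) ∈ K :=
    ⟨⟨by simp [hgx], by simp [hgy]⟩,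
      fun a _ => ⟨le_min (le_max_right _ _) zero_le_one, min_le_right _ _⟩⟩
  exact (hmin hgK).trans (hE.truncate_le g)

theorem rpow_inv_add_le_pCond [DecidableEq A] (hp : 0 < p) (hE : IsPEnergyT p E)
    (hxy : x ≠ y) (hxz : 0 < pCond E x z) (hzy : 0 < pCond E z y) :
    ((pCond E x z)⁻¹ ^ (1 / p) + (pCond E z y)⁻¹ ^ (1 / p))⁻¹ ^ p ≤ pCond E x y := by
  set S := (pCond E x z)⁻¹ ^ (1 / p) + (pCond E z y)⁻¹ ^ (1 / p)
  have hS : 0 < S := by positivity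
  refine le_csInf (competitors_nonempty hxy) ?_
  rintro _ ⟨f, ⟨hfx, hfy⟩, rfl⟩
  have hf : 1 ≤ E f ^ (1 / p) * S := by
    have hxy' : |f y - f x| = 1 := by simp [hfx, hfy]
    have htri := abs_sub_le (f y) (f z) (f x)
    have hxz_bd := abs_sub_le_of_pCond_pos hp hE hxz f
    have hzy_bd := abs_sub_le_of_pCond_pos hp hE hzy f
    linarith [mul_add (E f ^ (1 / p)) ((pCond E x z)⁻¹ ^ (1 / p)) ((pCond E z y)⁻¹ ^ (1 / p))]
  rw [← Real.le_rpow_inv_iff_of_pos (inv_nonneg.2 hS.le) (hE.nonneg f) hp, ← one_div p,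
    inv_le_iff_one_le_mul₀ hS]
  exact hf

end Conductance

section Resistance

variable {A : Type*} [DecidableEq A] {p : ℝ} {E : (A → ℝ) → ℝ} {x y z : A}

theorem pRes_self (x : A) : pRes E x x = 0 := if_pos rfl

theorem pRes_of_ne (hxy : x ≠ y) : pRes E x y = (ENNReal.ofReal (pCond E x y))⁻¹ :=
  if_neg hxy

theorem pRes_eq_zero_iff : pRes E x y = 0 ↔ x = y := by
  rcases eq_or_ne x y with rfl | hxy
  · simp [pRes_self]
  · simp [pRes_of_ne hxy, hxy]

theorem pRes_eq_top_iff (hxy : x ≠ y) : pRes E x y = ⊤ ↔ pCond E x y ≤ 0 := by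
  rw [pRes_of_ne hxy, ENNReal.inv_eq_top, ENNReal.ofReal_eq_zero]

theorem pRes_rpow_of_pCond_pos (hxy : x ≠ y) (hm : 0 < pCond E x y) (q : ℝ) :
    pRes E x y ^ q = ENNReal.ofReal ((pCond E x y)⁻¹ ^ q) := by
  rw [pRes_of_ne hxy, ← ENNReal.ofReal_inv_of_pos hm, ENNReal.ofReal_rpow_of_pos (inv_pos.2 hm)]

theorem pRes_symm (hE : IsPEnergyT p E) (x y : A) : pRes E x y = pRes E y x := by
  rcases eq_or_ne x y with rfl | hxy
  · rfl
  · rw [pRes_of_ne hxy, pRes_of_ne hxy.symm, pCond_symm hE]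

theorem pRes_ne_top [Fintype A] (hE : IsPEnergyT p E)
    (hnd : ∀ f : A → ℝ, E f = 0 ↔ ∃ c : ℝ, ∀ a, f a = c) (hxy : x ≠ y) : pRes E x y ≠ ⊤ := by
  rw [Ne, pRes_eq_top_iff hxy, not_le]
  exact pCond_pos hE hnd hxy

theorem pRes_rpow_le_add (hp : 0 < p) (hE : IsPEnergyT p E) (x y z : A) :
    pRes E x y ^ (1 / p) ≤ pRes E x z ^ (1 / p) + pRes E z y ^ (1 / p) := by
  have h1p : 0 < p⁻¹ := inv_pos.2 hp
  rcases eq_or_ne x y with rfl | hxy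
  · simp [pRes_self, ENNReal.zero_rpow_of_pos h1p]
  rcases eq_or_ne x z with rfl | hxz
  · simp [pRes_self, ENNReal.zero_rpow_of_pos h1p]
  rcases eq_or_ne z y with rfl | hzy
  · simp [pRes_self, ENNReal.zero_rpow_of_pos h1p]
  rcases le_or_gt (pCond E x z) 0 with hxz' | hxz'
  · simp [(pRes_eq_top_iff hxz).2 hxz', ENNReal.top_rpow_of_pos h1p]
  rcases le_or_gt (pCond E z y) 0 with hzy' | hzy'
  · simp [(pRes_eq_top_iff hzy).2 hzy', ENNReal.top_rpow_of_pos h1p]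
  have hseries := rpow_inv_add_le_pCond hp hE hxy hxz' hzy'
  set S := (pCond E x z)⁻¹ ^ (1 / p) + (pCond E z y)⁻¹ ^ (1 / p)
  have hS : 0 < S := by positivity
  have hSp : 0 < S⁻¹ ^ p := by positivity
  have hxy' : 0 < pCond E x y := hSp.trans_le hseries
  rw [pRes_rpow_of_pCond_pos hxy hxy', pRes_rpow_of_pCond_pos hxz hxz',
    pRes_rpow_of_pCond_pos hzy hzy', ← ENNReal.ofReal_add (by positivity) (by positivity)]
  refine ENNReal.ofReal_le_ofReal ?_
  calc (pCond E x y)⁻¹ ^ (1 / p) ≤ (S⁻¹ ^ p)⁻¹ ^ (1 / p) := by gcongr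
    _ = S := by
      rw [Real.inv_rpow hS.le, inv_inv, ← Real.rpow_mul hS.le, mul_one_div_cancel hp.ne',
        Real.rpow_one]

end Resistance

theorem pRes_rpow_triangle_and_metric_general {A : Type*} [Fintype A] [DecidableEq A]
    (p : ℝ) (hp : 1 < p)
    (E : (A → ℝ) → ℝ) (hE : IsPEnergyT p E) :
    (∀ x y z : A, pRes E x y ≠ ⊤ → pRes E x z ≠ ⊤ → pRes E y z ≠ ⊤ →
        pRes E x y ^ (1 / p) ≤ pRes E x z ^ (1 / p) + pRes E z y ^ (1 / p)) ∧
    ((∀ f : A → ℝ, E f = 0 ↔ ∃ c : ℝ, ∀ a, f a = c) →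
      (∀ x y : A, pRes E x y ^ (1 / p) = 0 ↔ x = y) ∧
      (∀ x y : A, pRes E x y = pRes E y x) ∧
      (∀ x y : A, x ≠ y → pRes E x y ≠ ⊤) ∧
      (∀ x y z : A,
        pRes E x z ^ (1 / p) ≤ pRes E x y ^ (1 / p) + pRes E y z ^ (1 / p))) := by
  have hp₀ : 0 < p := zero_lt_one.trans hp
  refine ⟨fun x y z _ _ _ => pRes_rpow_le_add hp₀ hE x y z, fun hnd =>
    ⟨fun x y => ?_, pRes_symm hE, fun x y => pRes_ne_top hE hnd,
      fun x y z => pRes_rpow_le_add hp₀ hE x z y⟩⟩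
  simp [ENNReal.rpow_eq_zero_iff, pRes_eq_zero_iff, hp₀, hp₀.le]

/-- For `x, y, z` with finite mutual resistances the triangle inequality
`R(x,y)^{1/p} ≤ R(x,z)^{1/p} + R(z,y)^{1/p}` holds.  Consequently, if `E` is
nondegenerate then `(x,y) ↦ R(x,y)^{1/p}` is a (finite-valued) metric on `A`. -/
theorem pRes_rpow_triangle_and_metric {A : Type*} [Fintype A] [DecidableEq A]
    (hA : 2 ≤ Fintype.card A) (p : ℝ) (hp : 1 < p)
    (E : (A → ℝ) → ℝ) (hE : IsPEnergyT p E) :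
    (∀ x y z : A, pRes E x y ≠ ⊤ → pRes E x z ≠ ⊤ → pRes E y z ≠ ⊤ →
        pRes E x y ^ (1 / p) ≤ pRes E x z ^ (1 / p) + pRes E z y ^ (1 / p)) ∧
    ((∀ f : A → ℝ, E f = 0 ↔ ∃ c : ℝ, ∀ a, f a = c) →
      (∀ x y : A, pRes E x y ^ (1 / p) = 0 ↔ x = y) ∧
      (∀ x y : A, pRes E x y = pRes E y x) ∧
      (∀ x y : A, x ≠ y → pRes E x y ≠ ⊤) ∧
      (∀ x y z : A,
        pRes E x z ^ (1 / p) ≤ pRes E x y ^ (1 / p) + pRes E y z ^ (1 / p))) :=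
  pRes_rpow_triangle_and_metric_general p hp E hE
end

section
/- Let E be a p-energy on a finite set A. Then for every f : A → ℝ, E(|f|) ≤ 2^p E(f). -/
lemma mul_min_max_inv_mul_eq_max {t a : ℝ} (ht : 0 < t) (ha : a ≤ t) :
    t * min (max (t⁻¹ * a) 0) 1 = max a 0 := by
  rw [mul_min_of_nonneg _ _ ht.le, mul_max_of_nonneg _ _ ht.le, mul_inv_cancel_left₀ ht.ne',
    mul_zero, mul_one, min_eq_left (max_le ha ht.le)]

lemma abs_eq_two_mul_half_max_add_half_max (a : ℝ) :
    |a| = 2 * (1 / 2 * max a 0 + (1 - 1 / 2) * max (-a) 0) := by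
  rcases le_total 0 a with ha | ha
  · rw [abs_of_nonneg ha, max_eq_left ha, max_eq_right (neg_nonpos.2 ha)]
    ring
  · rw [abs_of_nonpos ha, max_eq_right ha, max_eq_left (neg_nonneg.2 ha)]
    ring

namespace IsPEnergyT

variable {A : Type*} {p : ℝ} {E : (A → ℝ) → ℝ}

lemma map_neg (hE : IsPEnergyT p E) (f : A → ℝ) : E (fun x => -f x) = E f := by
  simpa using hE.2.2.1 f (-1)

lemma map_max_zero_le [Finite A] (hE : IsPEnergyT p E) (f : A → ℝ) :
    E (fun x => max (f x) 0) ≤ E f := by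
  obtain ⟨-, -, hhom, -, hmarkov⟩ := hE
  obtain ⟨M, hM⟩ := Finite.bddAbove_range f
  set t := max M 1
  have ht : 0 < t := lt_max_of_lt_right one_pos
  have hft (x : A) : f x ≤ t := (hM ⟨x, rfl⟩).trans (le_max_left M 1)
  have hclip : (fun x => max (f x) 0) = fun x => t * min (max (t⁻¹ * f x) 0) 1 := by
    funext x
    exact (mul_min_max_inv_mul_eq_max ht (hft x)).symm
  calc E (fun x => max (f x) 0)
      = t ^ p * E (fun x => min (max (t⁻¹ * f x) 0) 1) := by rw [hclip, hhom, abs_of_pos ht]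
    _ ≤ t ^ p * E (fun x => t⁻¹ * f x) := by gcongr; exact hmarkov _
    _ = (t * t⁻¹) ^ p * E f := by
      rw [hhom, abs_of_pos (inv_pos.2 ht), Real.mul_rpow ht.le (inv_nonneg.2 ht.le), mul_assoc]
    _ = E f := by rw [mul_inv_cancel₀ ht.ne', Real.one_rpow, one_mul]

end IsPEnergyT

theorem pEnergy_abs_le_general {A : Type*} [Fintype A]
    (p : ℝ) (E : (A → ℝ) → ℝ) (hE : IsPEnergyT p E)
    (f : A → ℝ) :
    E (fun x => |f x|) ≤ (2 : ℝ) ^ p * E f := by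
  have hsplit : (fun x => |f x|) =
      fun x => 2 * (1 / 2 * max (f x) 0 + (1 - 1 / 2) * max (-f x) 0) := by
    funext x
    exact abs_eq_two_mul_half_max_add_half_max (f x)
  calc E (fun x => |f x|)
      = 2 ^ p * E (fun x => 1 / 2 * max (f x) 0 + (1 - 1 / 2) * max (-f x) 0) := by
        rw [hsplit, hE.2.2.1, abs_two]
    _ ≤ 2 ^ p * (1 / 2 * E (fun x => max (f x) 0) + (1 - 1 / 2) * E (fun x => max (-f x) 0)) := by
        gcongr
        exact hE.2.1 _ _ _ (by norm_num) (by norm_num)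
    _ ≤ 2 ^ p * (1 / 2 * E f + (1 - 1 / 2) * E f) := by
        gcongr
        · exact hE.map_max_zero_le f
        · exact (hE.map_max_zero_le _).trans (hE.map_neg f).le
    _ = 2 ^ p * E f := by ring

/-- For any `p`-energy `E` on a finite set and any `f`, `E(|f|) ≤ 2^p E(f)`. -/
theorem pEnergy_abs_le {A : Type*} [Fintype A]
    (p : ℝ) (hp : 1 < p) (E : (A → ℝ) → ℝ) (hE : IsPEnergyT p E)
    (f : A → ℝ) :
    E (fun x => |f x|) ≤ (2 : ℝ) ^ p * E f :=
  pEnergy_abs_le_general p E hE f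
end

section
/- Let A be a finite set, 1<p<∞, and Ē the resistance comparison form from the previous construction: Ē(f) = Σ_{x≠y} R(x,y)⁻¹|f(x)-f(y)|^p with resistance R̄. Then for all distinct x,y ∈ A, R̄(x,y) ≤ R(x,y) and R̄(x,y) ≥ (#A)^{-p-2} R(x,y). -/
open scoped ENNReal

/-- A (nondegenerate) `p`-energy on `A`: nonnegative, convex, `p`-homogeneous,
invariant under addition of constants, Markovian, nondegenerate. -/
def IsPEnergy {A : Type*} (p : ℝ) (E : (A → ℝ) → ℝ) : Prop :=
  (∀ f : A → ℝ, 0 ≤ E f) ∧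
  (∀ f g : A → ℝ, ∀ t : ℝ, 0 < t → t < 1 →
      E (fun x => t * f x + (1 - t) * g x) ≤ t * E f + (1 - t) * E g) ∧
  (∀ (f : A → ℝ) (t : ℝ), E (fun x => t * f x) = |t| ^ p * E f) ∧
  (∀ (f : A → ℝ) (c : ℝ), E (fun x => f x + c) = E f) ∧
  (∀ f : A → ℝ, E (fun x => min (max (f x) 0) 1) ≤ E f) ∧
  (∀ f : A → ℝ, E f = 0 ↔ ∃ c : ℝ, ∀ x, f x = c)

/-- The standard form `Ē(f) = Σ_{x≠y} R(x,y)⁻¹ |f(x)-f(y)|^p`. -/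
noncomputable def stdForm {A : Type*} [Fintype A] [DecidableEq A]
    (p : ℝ) (E : (A → ℝ) → ℝ) (f : A → ℝ) : ℝ :=
  ∑ x : A, ∑ y : A, ((pRes E x y)⁻¹).toReal * |f x - f y| ^ p

/-!
For `f` with `f x = 0` and `f y = 1` the single term of `Ē(f)` at `(x, y)` already equals
`R(x,y)⁻¹`, so `R̄(x,y) ≤ R(x,y)`. Conversely, rescaling any `g` with `g z ≠ g w` into a competitor
for `R(z,w)` shows that every term of `Ē(g)` is at most `E(g)`; hence `Ē ≤ (#A)² E`, so
`R̄ ≥ (#A)⁻² R ≥ (#A)^{-p-2} R`.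
-/

open Finset

noncomputable def capacity {A : Type*} (E : (A → ℝ) → ℝ) (x y : A) : ℝ :=
  sInf (E '' {f : A → ℝ | f x = 0 ∧ f y = 1})

section Capacity

variable {A : Type*} {E F : (A → ℝ) → ℝ} {x y : A}

lemma pRes_eq_inv_capacity [DecidableEq A] (hxy : x ≠ y) :
    pRes E x y = (ENNReal.ofReal (capacity E x y))⁻¹ :=
  if_neg hxy

lemma capacity_nonneg (hE0 : ∀ f, 0 ≤ E f) : 0 ≤ capacity E x y :=
  Real.sInf_nonneg (by rintro _ ⟨f, -, rfl⟩; exact hE0 f)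

lemma capacity_le (hE0 : ∀ f, 0 ≤ E f) {f : A → ℝ} (hfx : f x = 0) (hfy : f y = 1) :
    capacity E x y ≤ E f :=
  csInf_le ⟨0, by rintro _ ⟨g, -, rfl⟩; exact hE0 g⟩ ⟨f, ⟨hfx, hfy⟩, rfl⟩

lemma le_capacity [DecidableEq A] (hxy : x ≠ y) {c : ℝ}
    (h : ∀ f : A → ℝ, f x = 0 → f y = 1 → c ≤ E f) : c ≤ capacity E x y := by
  refine le_csInf ⟨E (Pi.single y 1), Pi.single y 1, ?_, rfl⟩ ?_
  · simp [hxy]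
  · rintro _ ⟨f, ⟨hfx, hfy⟩, rfl⟩
    exact h f hfx hfy

lemma capacity_le_mul_capacity [DecidableEq A] (hxy : x ≠ y) (hF0 : ∀ f, 0 ≤ F f) {c : ℝ}
    (hc : 0 < c) (h : ∀ f, F f ≤ c * E f) : capacity F x y ≤ c * capacity E x y := by
  rw [← div_le_iff₀' hc]
  refine le_capacity hxy fun f hfx hfy => ?_
  rw [div_le_iff₀' hc]
  exact (capacity_le hF0 hfx hfy).trans (h f)

end Capacity

section Energy

variable {A : Type*} [DecidableEq A] {p : ℝ} {E : (A → ℝ) → ℝ}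

lemma IsPEnergy.inv_pRes_mul_le (hE : IsPEnergy p E) (hp : p ≠ 0) (g : A → ℝ) (z w : A) :
    ((pRes E z w)⁻¹).toReal * |g z - g w| ^ p ≤ E g := by
  obtain ⟨hE0, -, hhom, htrans, -⟩ := hE
  rcases eq_or_ne z w with rfl | hzw
  · simpa [pRes] using hE0 g
  rw [pRes_eq_inv_capacity hzw, inv_inv, ENNReal.toReal_ofReal (capacity_nonneg hE0)]
  rcases eq_or_ne (g z) (g w) with hg | hg
  · simpa [hg, Real.zero_rpow hp] using hE0 g
  set d := g w - g z
  have hd0 : d ≠ 0 := sub_ne_zero.2 hg.symm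
  have hd : 0 < |d| := abs_pos.2 hd0
  have hcap : capacity E z w ≤ (|d| ^ p)⁻¹ * E g := by
    calc capacity E z w ≤ E (fun u => d⁻¹ * (g u + -g z)) :=
          capacity_le hE0 (by simp) (by rw [← sub_eq_add_neg]; exact inv_mul_cancel₀ hd0)
      _ = (|d| ^ p)⁻¹ * E g := by
          rw [hhom, htrans, abs_inv, Real.inv_rpow (abs_nonneg d)]
  rw [abs_sub_comm, ← le_div_iff₀ (Real.rpow_pos_of_pos hd p), div_eq_inv_mul]
  exact hcap

end Energy

section StdForm

variable {A : Type*} [Fintype A] [DecidableEq A] {p : ℝ} {E : (A → ℝ) → ℝ}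

lemma stdForm_nonneg (f : A → ℝ) : 0 ≤ stdForm p E f := by
  unfold stdForm
  exact sum_nonneg fun _ _ => sum_nonneg fun _ _ =>
    mul_nonneg ENNReal.toReal_nonneg (Real.rpow_nonneg (abs_nonneg _) p)

lemma inv_pRes_mul_le_stdForm (f : A → ℝ) (z w : A) :
    ((pRes E z w)⁻¹).toReal * |f z - f w| ^ p ≤ stdForm p E f := by
  have hterm : ∀ a b : A, 0 ≤ ((pRes E a b)⁻¹).toReal * |f a - f b| ^ p := fun _ _ =>
    mul_nonneg ENNReal.toReal_nonneg (Real.rpow_nonneg (abs_nonneg _) p)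
  unfold stdForm
  exact (single_le_sum (fun b _ => hterm z b) (mem_univ w)).trans
    (single_le_sum (fun a _ => sum_nonneg fun b _ => hterm a b) (mem_univ z))

lemma capacity_le_capacity_stdForm (hE0 : ∀ f, 0 ≤ E f) {x y : A} (hxy : x ≠ y) :
    capacity E x y ≤ capacity (stdForm p E) x y := by
  refine le_capacity hxy fun f hfx hfy => ?_
  have := inv_pRes_mul_le_stdForm (p := p) (E := E) f x y
  rwa [pRes_eq_inv_capacity hxy, inv_inv, ENNReal.toReal_ofReal (capacity_nonneg hE0), hfx, hfy,
    zero_sub, abs_neg, abs_one, Real.one_rpow, mul_one] at this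

lemma IsPEnergy.stdForm_le_card_sq_mul (hE : IsPEnergy p E) (hp : p ≠ 0) (f : A → ℝ) :
    stdForm p E f ≤ (Fintype.card A : ℝ) ^ 2 * E f := by
  calc stdForm p E f ≤ ∑ _z : A, ∑ _w : A, E f := by
        unfold stdForm
        exact sum_le_sum fun z _ => sum_le_sum fun w _ => hE.inv_pRes_mul_le hp f z w
    _ = (Fintype.card A : ℝ) ^ 2 * E f := by
        simp only [sum_const, card_univ, nsmul_eq_mul]
        ring

end StdForm

lemma ENNReal.ofReal_inv_mul_ofReal_inv_le {a b c : ℝ} (ha : 0 < a) (h : c ≤ a * b) :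
    (ENNReal.ofReal a)⁻¹ * (ENNReal.ofReal b)⁻¹ ≤ (ENNReal.ofReal c)⁻¹ := by
  rw [← ENNReal.mul_inv (.inl (by simpa using ha)) (.inl ENNReal.ofReal_ne_top),
    ← ENNReal.ofReal_mul ha.le]
  exact ENNReal.inv_le_inv.2 (ENNReal.ofReal_le_ofReal h)

theorem stdForm_res_comparable_general {A : Type*} [Fintype A] [DecidableEq A]
    (p : ℝ) (hp : 1 < p)
    (E : (A → ℝ) → ℝ) (hE : IsPEnergy p E)
    (x y : A) (hxy : x ≠ y) :
    pRes (stdForm p E) x y ≤ pRes E x y ∧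
    ENNReal.ofReal ((Fintype.card A : ℝ) ^ (-p - 2)) * pRes E x y ≤
      pRes (stdForm p E) x y := by
  have hN : (1 : ℝ) ≤ Fintype.card A := by exact_mod_cast Fintype.card_pos_iff.2 ⟨x⟩
  set N : ℝ := (Fintype.card A : ℝ)
  have hN2 : N ^ 2 ≤ N ^ (p + 2) := by
    rw [← Real.rpow_two]
    exact Real.rpow_le_rpow_of_exponent_le hN (by linarith)
  have hupper : capacity (stdForm p E) x y ≤ N ^ (p + 2) * capacity E x y :=
    (capacity_le_mul_capacity hxy stdForm_nonneg (by positivity)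
      (hE.stdForm_le_card_sq_mul (by positivity))).trans
      (mul_le_mul_of_nonneg_right hN2 (capacity_nonneg hE.1))
  rw [pRes_eq_inv_capacity hxy, pRes_eq_inv_capacity hxy]
  refine ⟨ENNReal.inv_le_inv.2 (ENNReal.ofReal_le_ofReal
    (capacity_le_capacity_stdForm hE.1 hxy)), ?_⟩
  rw [show -p - 2 = -(p + 2) by ring, Real.rpow_neg (by positivity),
    ENNReal.ofReal_inv_of_pos (by positivity)]
  exact ENNReal.ofReal_inv_mul_ofReal_inv_le (by positivity) hupper

/-- With `R̄` the resistance of the standard form `Ē`, one has, for all distinct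
`x, y`: `R̄(x,y) ≤ R(x,y)` and `R̄(x,y) ≥ (#A)^{-p-2} R(x,y)`. -/
theorem stdForm_res_comparable {A : Type*} [Fintype A] [DecidableEq A]
    (hA : 2 ≤ Fintype.card A) (p : ℝ) (hp : 1 < p)
    (E : (A → ℝ) → ℝ) (hE : IsPEnergy p E)
    (x y : A) (hxy : x ≠ y) :
    pRes (stdForm p E) x y ≤ pRes E x y ∧
    ENNReal.ofReal ((Fintype.card A : ℝ) ^ (-p - 2)) * pRes E x y ≤
      pRes (stdForm p E) x y :=
  stdForm_res_comparable_general p hp E hE x y hxy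
end

section
/- Let A be a finite set and E a nondegenerate p-energy on A with resistance R. Suppose J, J' are two non-trivial equivalence relations on A such that δ_J(E) < 1 and δ_{J'}(E) < 1, where δ_J(E) = (max_{x J y, x≠y} R(x,y)) / (min over non-J-equivalent pairs of R(x,y)). Then either J ⊆ J' or J' ⊆ J. -/
/-- The real-valued `p`-resistance `R(x,y) = (inf{E f : f x = 0, f y = 1})⁻¹`. -/
noncomputable def rRes {A : Type*} (E : (A → ℝ) → ℝ) (x y : A) : ℝ :=
  (sInf (E '' {f : A → ℝ | f x = 0 ∧ f y = 1}))⁻¹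

/-- A non-trivial equivalence relation on `A`: neither equality nor the total
relation. -/
def IsNontrivialEquiv {A : Type*} (J : A → A → Prop) : Prop :=
  Equivalence J ∧ (∃ x y : A, x ≠ y ∧ J x y) ∧ (∃ x y : A, ¬ J x y)

/-- `δ_J(E) = (max_{x J y, x ≠ y} R(x,y)) / (min_{¬ x J y} R(x,y))`. -/
noncomputable def deltaJ {A : Type*} (E : (A → ℝ) → ℝ) (J : A → A → Prop) : ℝ :=
  sSup {d : ℝ | ∃ x y : A, x ≠ y ∧ J x y ∧ d = rRes E x y} /
    sInf {d : ℝ | ∃ x y : A, ¬ J x y ∧ d = rRes E x y}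

/-!
When `δ_J(E) < 1`, every resistance inside a class of `J` is smaller than every resistance
between two classes. If `J` and `J'` were incomparable, there would be a pair `x J y` that `J'`
separates and a pair `u J' v` that `J` separates; then `R(x,y) < R(u,v)` by `δ_J(E) < 1` and
`R(u,v) < R(x,y)` by `δ_{J'}(E) < 1`. Reading `δ_J(E) < 1` this way needs the denominator
`min R` to be positive, which holds because the energy attains a positive minimum on the
compact set of `[0,1]`-valued functions with `f x = 0`, `f y = 1` (Markov property).
-/

namespace IsPEnergy

variable {A : Type*} {p : ℝ} {E : (A → ℝ) → ℝ}

lemma convexOn (hE : IsPEnergy p E) : ConvexOn ℝ Set.univ E := by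
  refine ⟨convex_univ, fun f _ g _ a b ha hb hab => ?_⟩
  obtain rfl : b = 1 - a := by linarith
  rcases ha.eq_or_lt with rfl | ha
  · simp
  rcases hb.eq_or_lt with hb | hb
  · obtain rfl : a = 1 := by linarith
    simp
  exact hE.2.1 f g a ha (by linarith)

lemma continuous [Fintype A] (hE : IsPEnergy p E) : Continuous E :=
  continuousOn_univ.mp (hE.convexOn.continuousOn isOpen_univ)

lemma pos_of_ne (hE : IsPEnergy p E) {f : A → ℝ} {x y : A} (hf : f x ≠ f y) : 0 < E f := by
  refine (hE.1 f).lt_of_ne fun h => ?_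
  obtain ⟨c, hc⟩ := (hE.2.2.2.2.2 f).mp h.symm
  exact hf ((hc x).trans (hc y).symm)

/-- The clipped functions form a compact set, and clipping does not increase the energy. -/
lemma exists_isMinOn_pinned [Fintype A] (hE : IsPEnergy p E) {x y : A} (hxy : x ≠ y) :
    ∃ f₀ ∈ {f : A → ℝ | f x = 0 ∧ f y = 1}, IsMinOn E {f : A → ℝ | f x = 0 ∧ f y = 1} f₀ := by
  classical
  set S : Set (A → ℝ) := {f | f x = 0 ∧ f y = 1}
  have hS : IsClosed S :=
    (isClosed_eq (continuous_apply x) continuous_const).inter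
      (isClosed_eq (continuous_apply y) continuous_const)
  have hK : IsCompact (Set.Icc 0 1 ∩ S) := isCompact_Icc.inter_right hS
  have hind : Pi.single y 1 ∈ Set.Icc 0 1 ∩ S :=
    ⟨⟨Pi.single_nonneg.mpr zero_le_one, fun z => by
      rcases eq_or_ne z y with rfl | hz <;> simp [*]⟩, by simp [hxy], by simp⟩
  obtain ⟨f₀, ⟨-, hf₀S⟩, hmin⟩ := hK.exists_isMinOn ⟨_, hind⟩ hE.continuous.continuousOn
  refine ⟨f₀, hf₀S, fun f ⟨hfx, hfy⟩ => ?_⟩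
  have hclip : (fun z => min (max (f z) 0) 1) ∈ Set.Icc 0 1 ∩ S :=
    ⟨⟨fun z => by simp, fun z => by simp⟩, by simp [hfx], by simp [hfy]⟩
  exact (hmin hclip).trans (hE.2.2.2.2.1 f)

lemma rRes_pos [Fintype A] (hE : IsPEnergy p E) {x y : A} (hxy : x ≠ y) : 0 < rRes E x y := by
  obtain ⟨f₀, ⟨hf₀x, hf₀y⟩, hmin⟩ := hE.exists_isMinOn_pinned hxy
  have hf₀ : 0 < E f₀ := hE.pos_of_ne (x := x) (y := y) (by simp [hf₀x, hf₀y])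
  refine inv_pos.mpr (hf₀.trans_le (le_csInf ⟨_, f₀, ⟨hf₀x, hf₀y⟩, rfl⟩ ?_))
  rintro _ ⟨f, hf, rfl⟩
  exact hmin hf

lemma rRes_lt_of_deltaJ_lt_one [Fintype A] (hE : IsPEnergy p E) {J : A → A → Prop}
    (hJ : ∀ a, J a a) (hδ : deltaJ E J < 1) {x y u v : A} (hxy : x ≠ y) (hJxy : J x y)
    (hJuv : ¬ J u v) : rRes E x y < rRes E u v := by
  set inner := {d : ℝ | ∃ x y : A, x ≠ y ∧ J x y ∧ d = rRes E x y}
  set outer := {d : ℝ | ∃ x y : A, ¬ J x y ∧ d = rRes E x y}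
  have hrange : Set.Finite (Set.range fun q : A × A => rRes E q.1 q.2) := Set.finite_range _
  have hinner : inner.Finite := hrange.subset (by rintro _ ⟨a, b, -, -, rfl⟩; exact ⟨(a, b), rfl⟩)
  have houter : outer.Finite := hrange.subset (by rintro _ ⟨a, b, -, rfl⟩; exact ⟨(a, b), rfl⟩)
  have hpos : 0 < sInf outer := by
    obtain ⟨a, b, hab, hd⟩ := (show outer.Nonempty from ⟨_, u, v, hJuv, rfl⟩).csInf_mem houter
    exact hd ▸ hE.rRes_pos fun h => hab (h ▸ hJ a)
  calc rRes E x y ≤ sSup inner := le_csSup hinner.bddAbove ⟨x, y, hxy, hJxy, rfl⟩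
    _ < sInf outer := (div_lt_one hpos).mp hδ
    _ ≤ rRes E u v := csInf_le houter.bddBelow ⟨u, v, hJuv, rfl⟩

end IsPEnergy

theorem deltaJ_lt_one_comparable_general {A : Type*} [Fintype A]
    (p : ℝ)
    (E : (A → ℝ) → ℝ) (hE : IsPEnergy p E)
    (J J' : A → A → Prop)
    (hJ : IsNontrivialEquiv J) (hJ' : IsNontrivialEquiv J')
    (hδ : deltaJ E J < 1) (hδ' : deltaJ E J' < 1) :
    (∀ x y : A, J x y → J' x y) ∨ (∀ x y : A, J' x y → J x y) := by
  by_contra! ⟨⟨x, y, hJxy, hJ'xy⟩, ⟨u, v, hJ'uv, hJuv⟩⟩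
  have hxy : x ≠ y := fun h => hJ'xy (h ▸ hJ'.1.refl x)
  have huv : u ≠ v := fun h => hJuv (h ▸ hJ.1.refl u)
  exact lt_asymm (hE.rRes_lt_of_deltaJ_lt_one hJ.1.refl hδ hxy hJxy hJuv)
    (hE.rRes_lt_of_deltaJ_lt_one hJ'.1.refl hδ' huv hJ'uv hJ'xy)

/-- If `J` and `J'` are non-trivial equivalence relations with
`δ_J(E) < 1` and `δ_{J'}(E) < 1`, then `J ⊆ J'` or `J' ⊆ J`. -/
theorem deltaJ_lt_one_comparable {A : Type*} [Fintype A]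
    (hA : 2 ≤ Fintype.card A) (p : ℝ) (hp : 1 < p)
    (E : (A → ℝ) → ℝ) (hE : IsPEnergy p E)
    (J J' : A → A → Prop)
    (hJ : IsNontrivialEquiv J) (hJ' : IsNontrivialEquiv J')
    (hδ : deltaJ E J < 1) (hδ' : deltaJ E J' < 1) :
    (∀ x y : A, J x y → J' x y) ∨ (∀ x y : A, J' x y → J x y) :=
  deltaJ_lt_one_comparable_general p E hE J J' hJ hJ' hδ hδ'
end

section
/- Let E₁, E₂ be nondegenerate p-energies on V₀ and T the renormalization map as above. Then inf(T E₁ | E₁) ≤ sup(T E₂ | E₂). -/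
/-- `Λ E (g) = Σᵢ rᵢ⁻¹ E (g ∘ Fᵢ)`. -/
noncomputable def lamE {V0 V1 : Type*} (N : ℕ) (F : Fin N → V0 → V1)
    (r : Fin N → ℝ) (E : (V0 → ℝ) → ℝ) : (V1 → ℝ) → ℝ :=
  fun g => ∑ i : Fin N, (r i)⁻¹ * E (fun x => g (F i x))

/-- The trace to `V₀` (embedded via `ι`) of a functional on `V₁`. -/
noncomputable def trE {V0 V1 : Type*} (ι : V0 → V1)
    (Λ : (V1 → ℝ) → ℝ) : (V0 → ℝ) → ℝ :=
  fun f => sInf {e : ℝ | ∃ g : V1 → ℝ, (∀ x : V0, g (ι x) = f x) ∧ Λ g = e}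

/-- The renormalization map `T E = [Λ E]_{V₀}`. -/
noncomputable def renorm {V0 V1 : Type*} (ι : V0 → V1) (N : ℕ)
    (F : Fin N → V0 → V1) (r : Fin N → ℝ) (E : (V0 → ℝ) → ℝ) :
    (V0 → ℝ) → ℝ :=
  trE ι (lamE N F r E)

/-- `sup(E|E') = sup { E f / E' f : E f + E' f > 0 }`. -/
noncomputable def supRatio {X : Type*} (E E' : (X → ℝ) → ℝ) : ℝ :=
  sSup {d : ℝ | ∃ f : X → ℝ, 0 < E f + E' f ∧ d = E f / E' f}

/-- `inf(E|E') = inf { E f / E' f : E f + E' f > 0 }`. -/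
noncomputable def infRatio {X : Type*} (E E' : (X → ℝ) → ℝ) : ℝ :=
  sInf {d : ℝ | ∃ f : X → ℝ, 0 < E f + E' f ∧ d = E f / E' f}

/-!
Write `a = inf(T E₁ | E₁)` and `b = sup(T E₂ | E₂)`. The trace `T E` is monotone and positively
homogeneous of degree one in `E`, so `E₁ ≤ μ E₂` gives `T E₁ ≤ μ T E₂`. A ratio `Q / E` of
`p`-homogeneous, translation-invariant functionals is invariant under `f ↦ t f + c`, hence attains
its maximum on the compact set of normalized functions. Taking `f₀` where `E₁ / E₂` attains its
maximum `μ`,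
  `a E₁ f₀ ≤ T E₁ f₀ ≤ μ T E₂ f₀ ≤ μ b E₂ f₀ = b E₁ f₀`.
The same compactness argument bounds `T E₂` by a multiple of `E₂`, so that `b` is a genuine
supremum and not the value `sSup` takes on an unbounded set.
-/

namespace IsPEnergy

variable {A : Type*} {p : ℝ} {E : (A → ℝ) → ℝ}

lemma nonneg (hE : IsPEnergy p E) (f : A → ℝ) : 0 ≤ E f := hE.1 f

lemma smul (hE : IsPEnergy p E) (f : A → ℝ) (t : ℝ) :
    E (fun x => t * f x) = |t| ^ p * E f :=
  hE.2.2.1 f t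

lemma add_const (hE : IsPEnergy p E) (f : A → ℝ) (c : ℝ) : E (fun x => f x + c) = E f :=
  hE.2.2.2.1 f c

lemma eq_zero_iff (hE : IsPEnergy p E) {f : A → ℝ} : E f = 0 ↔ ∃ c, ∀ x, f x = c :=
  hE.2.2.2.2.2 f

lemma pos_of_not_const (hE : IsPEnergy p E) {f : A → ℝ} (hf : ¬∃ c, ∀ x, f x = c) :
    0 < E f :=
  (hE.nonneg f).lt_of_ne fun h => hf (hE.eq_zero_iff.1 h.symm)

end IsPEnergy

section Comparison

variable {A : Type*} [Fintype A]

lemma exists_eq_smul_add_const_of_not_const (x₀ : A) {f : A → ℝ}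
    (hf : ¬∃ c, ∀ x, f x = c) :
    ∃ t > 0, ∃ h : A → ℝ, h x₀ = 0 ∧ ‖h‖ = 1 ∧ f = fun x => t * h x + f x₀ := by
  set g : A → ℝ := fun x => f x - f x₀
  have hg : ‖g‖ ≠ 0 :=
    norm_ne_zero_iff.2 fun h0 => hf ⟨f x₀, fun x => sub_eq_zero.1 (congrFun h0 x)⟩
  refine ⟨‖g‖, (norm_nonneg g).lt_of_ne' hg, ‖g‖⁻¹ • g, by simp [g], ?_, ?_⟩
  · rw [norm_smul, norm_inv, norm_norm, inv_mul_cancel₀ hg]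
  · funext x
    simp [g, mul_inv_cancel_left₀ hg]

variable {p : ℝ} {E Q : (A → ℝ) → ℝ}

theorem IsPEnergy.exists_ratio_maximizer [Nontrivial A] (hp : 0 < p) (hE : IsPEnergy p E)
    (hQ : Continuous Q) (hQ_smul : ∀ f t, Q (fun x => t * f x) = |t| ^ p * Q f)
    (hQ_add : ∀ f c, Q (fun x => f x + c) = Q f) :
    ∃ f₀, 0 < E f₀ ∧ ∀ f, Q f ≤ Q f₀ / E f₀ * E f := by
  classical
  obtain ⟨x₀, x₁, hne⟩ := exists_pair_ne A
  set K : Set (A → ℝ) := Metric.sphere 0 1 ∩ {f | f x₀ = 0}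
  have hK : IsCompact K :=
    (isCompact_sphere 0 1).inter_right (isClosed_eq (continuous_apply x₀) continuous_const)
  have hEK : ∀ f ∈ K, 0 < E f := by
    rintro f ⟨hf1, hf0⟩
    refine hE.pos_of_not_const fun ⟨c, hc⟩ => ?_
    have : f = 0 := funext fun x => (hc x).trans ((hc x₀).symm.trans hf0)
    simp [this] at hf1
  obtain ⟨k, hkK, hk⟩ := hK.exists_isMaxOn ⟨Pi.single x₁ 1, by simp [K, hne, Pi.norm_single]⟩
    (hQ.continuousOn.div hE.continuous.continuousOn fun f hf => (hEK f hf).ne')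
  refine ⟨k, hEK k hkK, fun f => ?_⟩
  by_cases hf : ∃ c, ∀ x, f x = c
  · obtain ⟨c, hc⟩ := hf
    have hQ0 := hQ_smul (fun _ => 0) 0
    have hQc := hQ_add (fun _ => 0) c
    simp only [mul_zero, abs_zero, Real.zero_rpow hp.ne', zero_mul, zero_add] at hQ0 hQc
    rw [funext hc, hQc, hQ0, hE.eq_zero_iff.2 ⟨c, fun _ => rfl⟩, mul_zero]
  obtain ⟨t, ht, h, hh0, hh1, hfh⟩ := exists_eq_smul_add_const_of_not_const x₀ hf
  have hhK : h ∈ K := ⟨by simpa using hh1, hh0⟩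
  have hQh : Q h ≤ Q k / E k * E h := (div_le_iff₀ (hEK h hhK)).1 (hk hhK)
  rw [hfh, hQ_add, hQ_smul, hE.add_const, hE.smul, abs_of_pos ht]
  calc t ^ p * Q h ≤ t ^ p * (Q k / E k * E h) :=
        mul_le_mul_of_nonneg_left hQh (Real.rpow_nonneg ht.le p)
    _ = Q k / E k * (t ^ p * E h) := by ring

end Comparison

section Ratio

variable {X : Type*} {E E' : (X → ℝ) → ℝ}

lemma infRatio_mul_le (hE : ∀ f, 0 ≤ E f) (hE' : ∀ f, 0 ≤ E' f)
    (hzero : ∀ f, E' f = 0 → E f = 0) (f : X → ℝ) : infRatio E E' * E' f ≤ E f := by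
  rcases (hE' f).eq_or_lt with h | h
  · rw [← h, hzero f h.symm, mul_zero]
  · refine (le_div_iff₀ h).1 (csInf_le ⟨0, ?_⟩ ⟨f, by linarith [hE f], rfl⟩)
    rintro _ ⟨g, -, rfl⟩
    exact div_nonneg (hE g) (hE' g)

lemma le_supRatio_mul (hE : ∀ f, 0 ≤ E f) (hE' : ∀ f, 0 ≤ E' f) {C : ℝ}
    (hC : ∀ f, E f ≤ C * E' f) (f : X → ℝ) : E f ≤ supRatio E E' * E' f := by
  rcases (hE' f).eq_or_lt with h | h
  · simpa [← h] using hC f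
  · refine (div_le_iff₀ h).1 (le_csSup ⟨C, ?_⟩ ⟨f, by linarith [hE f], rfl⟩)
    rintro _ ⟨g, hg, rfl⟩
    rcases (hE' g).eq_or_lt with h0 | h0
    · linarith [hC g, h0 ▸ mul_zero C]
    · exact (div_le_iff₀ h0).2 (hC g)

lemma supRatio_nonneg (hE : ∀ f, 0 ≤ E f) (hE' : ∀ f, 0 ≤ E' f) : 0 ≤ supRatio E E' :=
  Real.sSup_nonneg <| by
    rintro _ ⟨g, -, rfl⟩
    exact div_nonneg (hE g) (hE' g)

end Ratio

section Trace

variable {V0 V1 : Type*} {ι : V0 → V1} {Λ Λ' : (V1 → ℝ) → ℝ}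

lemma trE_nonneg (hΛ : ∀ g, 0 ≤ Λ g) (f : V0 → ℝ) : 0 ≤ trE ι Λ f :=
  Real.sInf_nonneg <| by
    rintro _ ⟨g, -, rfl⟩
    exact hΛ g

lemma trE_le (hΛ : ∀ g, 0 ≤ Λ g) {f : V0 → ℝ} {g : V1 → ℝ} (hg : ∀ x, g (ι x) = f x) :
    trE ι Λ f ≤ Λ g :=
  csInf_le ⟨0, by rintro _ ⟨g, -, rfl⟩; exact hΛ g⟩ ⟨g, hg, rfl⟩

lemma trE_le_mul (hι : Function.Injective ι) (hΛ : ∀ g, 0 ≤ Λ g) {μ : ℝ} (hμ : 0 ≤ μ)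
    (hle : ∀ g, Λ g ≤ μ * Λ' g) (f : V0 → ℝ) : trE ι Λ f ≤ μ * trE ι Λ' f := by
  rw [trE, trE, ← smul_eq_mul, ← Real.sInf_smul_of_nonneg hμ]
  refine le_csInf (Set.Nonempty.smul_set ⟨_, Function.extend ι f 0, hι.extend_apply f 0, rfl⟩) ?_
  rintro _ ⟨_, ⟨g, hg, rfl⟩, rfl⟩
  exact (trE_le hΛ hg).trans (hle g)

end Trace

section Lam

variable {V0 V1 : Type*} {N : ℕ} {F : Fin N → V0 → V1} {r : Fin N → ℝ} {p : ℝ}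
  {E E' : (V0 → ℝ) → ℝ}

lemma lamE_nonneg (hr : ∀ i, 0 ≤ r i) (hE : ∀ f, 0 ≤ E f) (g : V1 → ℝ) :
    0 ≤ lamE N F r E g :=
  Finset.sum_nonneg fun i _ => mul_nonneg (inv_nonneg.2 (hr i)) (hE _)

lemma lamE_const (hE : IsPEnergy p E) (c : ℝ) : lamE N F r E (fun _ => c) = 0 :=
  Finset.sum_eq_zero fun i _ => by rw [hE.eq_zero_iff.2 ⟨c, fun _ => rfl⟩, mul_zero]

lemma lamE_le_mul (hr : ∀ i, 0 ≤ r i) {μ : ℝ} (hle : ∀ f, E f ≤ μ * E' f) (g : V1 → ℝ) :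
    lamE N F r E g ≤ μ * lamE N F r E' g := by
  rw [lamE, lamE, Finset.mul_sum]
  refine Finset.sum_le_sum fun i _ => ?_
  rw [mul_left_comm]
  exact mul_le_mul_of_nonneg_left (hle _) (inv_nonneg.2 (hr i))

lemma lamE_smul (hE : IsPEnergy p E) (t : ℝ) (g : V1 → ℝ) :
    lamE N F r E (fun v => t * g v) = |t| ^ p * lamE N F r E g := by
  rw [lamE, lamE, Finset.mul_sum]
  refine Finset.sum_congr rfl fun i _ => ?_
  rw [hE.smul (fun x => g (F i x)), mul_left_comm]

lemma lamE_add_const (hE : IsPEnergy p E) (c : ℝ) (g : V1 → ℝ) :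
    lamE N F r E (fun v => g v + c) = lamE N F r E g :=
  Finset.sum_congr rfl fun i _ => by rw [hE.add_const (fun x => g (F i x))]

lemma continuous_lamE (hE : Continuous E) : Continuous (lamE N F r E) :=
  continuous_finsetSum _ fun i _ =>
    continuous_const.mul (hE.comp (continuous_pi fun x => continuous_apply (F i x)))

end Lam

section Renorm

variable {V0 V1 : Type*} {ι : V0 → V1} {N : ℕ} {F : Fin N → V0 → V1} {r : Fin N → ℝ} {p : ℝ}
  {E E' : (V0 → ℝ) → ℝ}

lemma renorm_nonneg (hr : ∀ i, 0 ≤ r i) (hE : ∀ f, 0 ≤ E f) (f : V0 → ℝ) :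
    0 ≤ renorm ι N F r E f :=
  trE_nonneg (lamE_nonneg hr hE) f

lemma renorm_eq_zero_of_eq_zero (hr : ∀ i, 0 ≤ r i) (hE : IsPEnergy p E) {f : V0 → ℝ}
    (hf : E f = 0) : renorm ι N F r E f = 0 := by
  obtain ⟨c, hc⟩ := hE.eq_zero_iff.1 hf
  refine le_antisymm ?_ (renorm_nonneg hr hE.nonneg f)
  exact (trE_le (lamE_nonneg hr hE.nonneg) fun x => (hc x).symm).trans_eq (lamE_const hE c)

lemma renorm_le_mul (hι : Function.Injective ι) (hr : ∀ i, 0 ≤ r i) (hE : ∀ f, 0 ≤ E f)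
    {μ : ℝ} (hμ : 0 ≤ μ) (hle : ∀ f, E f ≤ μ * E' f) (f : V0 → ℝ) :
    renorm ι N F r E f ≤ μ * renorm ι N F r E' f :=
  trE_le_mul hι (lamE_nonneg hr hE) hμ (lamE_le_mul hr hle) f

theorem exists_renorm_le_mul [Fintype V0] [Nontrivial V0] (hι : Function.Injective ι)
    (hr : ∀ i, 0 ≤ r i) (hp : 0 < p) (hE : IsPEnergy p E) :
    ∃ C, ∀ f, renorm ι N F r E f ≤ C * E f := by
  -- `f ∘ invFun ι` extends `f` linearly and commutes with adding constants.
  set ρ := Function.invFun ι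
  obtain ⟨g₀, -, hg₀⟩ := hE.exists_ratio_maximizer hp (Q := fun f => lamE N F r E (f ∘ ρ))
    ((continuous_lamE hE.continuous).comp (continuous_pi fun v => continuous_apply (ρ v)))
    (fun f t => lamE_smul hE t (f ∘ ρ)) (fun f c => lamE_add_const hE c (f ∘ ρ))
  refine ⟨_, fun f => (trE_le (lamE_nonneg hr hE.nonneg) fun x => ?_).trans (hg₀ f)⟩
  exact congrArg f (Function.leftInverse_invFun hι x)

end Renorm

theorem infRatio_renorm_le_supRatio_renorm_general {V0 V1 : Type*}
    [Fintype V0]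
    (ι : V0 → V1) (hι : Function.Injective ι)
    (N : ℕ) (F : Fin N → V0 → V1)
    (r : Fin N → ℝ) (hr : ∀ i, 0 < r i)
    (p : ℝ) (hp : 1 < p)
    (E₁ E₂ : (V0 → ℝ) → ℝ) (h₁ : IsPEnergy p E₁) (h₂ : IsPEnergy p E₂) :
    infRatio (renorm ι N F r E₁) E₁ ≤ supRatio (renorm ι N F r E₂) E₂ := by
  have hp' : 0 < p := zero_lt_one.trans hp
  have hr' : ∀ i, 0 ≤ r i := fun i => (hr i).le
  have hT₁ := renorm_nonneg (ι := ι) (F := F) hr' h₁.nonneg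
  have hT₂ := renorm_nonneg (ι := ι) (F := F) hr' h₂.nonneg
  have hb := supRatio_nonneg hT₂ h₂.nonneg
  rcases subsingleton_or_nontrivial V0 with hV | hV
  · -- Every function is constant, so the infimum is over the empty set: `sInf ∅ = 0`.
    have hE₁ : ∀ f, E₁ f = 0 := fun f => h₁.eq_zero_iff.2 <| by
      rcases isEmpty_or_nonempty V0 with _ | ⟨⟨x₀⟩⟩
      exacts [⟨0, isEmptyElim⟩, ⟨f x₀, fun x => congrArg f (Subsingleton.elim x x₀)⟩]
    simpa [infRatio, hE₁, renorm_eq_zero_of_eq_zero hr' h₁ (hE₁ _)] using hb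
  obtain ⟨f₀, hf₀, hmax⟩ := h₂.exists_ratio_maximizer hp' h₁.continuous h₁.smul h₁.add_const
  obtain ⟨C, hC⟩ := exists_renorm_le_mul (N := N) (F := F) hι hr' hp' h₂
  have hE₁f₀ : 0 < E₁ f₀ := h₁.pos_of_not_const fun hc => hf₀.ne' (h₂.eq_zero_iff.2 hc)
  have hμ : 0 ≤ E₁ f₀ / E₂ f₀ := div_nonneg hE₁f₀.le hf₀.le
  refine le_of_mul_le_mul_right ?_ hE₁f₀
  calc infRatio (renorm ι N F r E₁) E₁ * E₁ f₀ ≤ renorm ι N F r E₁ f₀ :=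
        infRatio_mul_le hT₁ h₁.nonneg (fun f hf => renorm_eq_zero_of_eq_zero hr' h₁ hf) f₀
    _ ≤ E₁ f₀ / E₂ f₀ * renorm ι N F r E₂ f₀ := renorm_le_mul hι hr' h₁.nonneg hμ hmax f₀
    _ ≤ E₁ f₀ / E₂ f₀ * (supRatio (renorm ι N F r E₂) E₂ * E₂ f₀) :=
        mul_le_mul_of_nonneg_left (le_supRatio_mul hT₂ h₂.nonneg hC f₀) hμ
    _ = supRatio (renorm ι N F r E₂) E₂ * E₁ f₀ := by field_simp

/-- For nondegenerate `p`-energies `E₁, E₂` on `V₀`: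
`inf(T E₁ | E₁) ≤ sup(T E₂ | E₂)`. -/
theorem infRatio_renorm_le_supRatio_renorm {V0 V1 : Type*}
    [Fintype V0] [Fintype V1]
    (ι : V0 → V1) (hι : Function.Injective ι)
    (N : ℕ) (hN : 2 ≤ N) (F : Fin N → V0 → V1)
    (hF : ∀ i, Function.Injective (F i))
    (r : Fin N → ℝ) (hr : ∀ i, 0 < r i)
    (p : ℝ) (hp : 1 < p)
    (E₁ E₂ : (V0 → ℝ) → ℝ) (h₁ : IsPEnergy p E₁) (h₂ : IsPEnergy p E₂) :
    infRatio (renorm ι N F r E₁) E₁ ≤ supRatio (renorm ι N F r E₂) E₂ :=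
  infRatio_renorm_le_supRatio_renorm_general ι hι N F r hr p hp E₁ E₂ h₁ h₂
end
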